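/- arXiv:2604.23798 — 7 statements merged into one kernel-verified Lean document; each statement's English description precedes it below -/
import Mathlib

section
/- Let d be a positive natural number. The merge operator ⊕ on softmax attention states with real maxima is associative: for all states u_a, u_b, u_c with m-components in ℝ, (u_a ⊕ u_b) ⊕ u_c = u_a ⊕ (u_b ⊕ u_c). -/
/-- A softmax attention state: running maximum `m`, normalized sum `S`,
and weighted value accumulator `W ∈ ℝ^d`. -/
abbrev AttnState (d : ℕ) := ℝ × ℝ × EuclideanSpace ℝ (Fin d)

/-- The casewise merge operator `⊕` on softmax attention states. -/
noncomputable def merge {d : ℕ} (a b : AttnState d) : AttnState d :=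
  if a.1 ≥ b.1 then
    (a.1, a.2.1 + b.2.1 * Real.exp (b.1 - a.1),
      a.2.2 + Real.exp (b.1 - a.1) • b.2.2)
  else
    (b.1, b.2.1 + a.2.1 * Real.exp (a.1 - b.1),
      b.2.2 + Real.exp (a.1 - b.1) • a.2.2)

/-- The merge operator `⊕` is associative. -/
theorem merge_assoc (d : ℕ) (hd : 0 < d) (ua ub uc : AttnState d) :
    merge (merge ua ub) uc = merge ua (merge ub uc) := by
  obtain ⟨ma, Sa, Wa⟩ := ua
  obtain ⟨mb, Sb, Wb⟩ := ub
  obtain ⟨mc, Sc, Wc⟩ := uc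
  simp only [merge, Real.exp_sub]
  split_ifs <;>
    refine Prod.ext ?_ (Prod.ext ?_ ?_) <;>
    simp_all [smul_add, smul_smul, add_assoc, add_comm, add_left_comm, mul_comm, mul_assoc,
      mul_left_comm, div_eq_mul_inv] <;>
    first | linarith | (field_simp; try ring)
end

section
/- Let d be a positive natural number. Define φ(m, S, W) = (m, S·exp(m), W·exp(m)) ∈ ℝ × ℝ × ℝ^d. Then φ intertwines the merge ⊕ with the componentwise operation (max, +, +): for all softmax attention states u_a, u_b with real maxima, writing φ(u_a) = (m_a, S̃_a, W̃_a) and φ(u_b) = (m_b, S̃_b, W̃_b), one has φ(u_a ⊕ u_b) = (max(m_a, m_b), S̃_a + S̃_b, W̃_a + W̃_b). -/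
/-- The unnormalization map `φ(m, S, W) = (m, S·exp m, W·exp m)`. -/
noncomputable def unnorm {d : ℕ} (a : AttnState d) : AttnState d :=
  (a.1, a.2.1 * Real.exp a.1, Real.exp a.1 • a.2.2)

/-- `φ` intertwines the merge `⊕` with the componentwise operation
`(max, +, +)`. -/
theorem unnorm_merge (d : ℕ) (hd : 0 < d) (ua ub : AttnState d) :
    unnorm (merge ua ub) =
      (max (unnorm ua).1 (unnorm ub).1,
        (unnorm ua).2.1 + (unnorm ub).2.1,
        (unnorm ua).2.2 + (unnorm ub).2.2) := by
  unfold merge unnorm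
  by_cases h : ua.1 ≥ ub.1
  · rw [if_pos h]
    refine Prod.ext ?_ (Prod.ext ?_ ?_) <;> simp [max_eq_left h, smul_smul,
      ← Real.exp_add, add_mul, mul_assoc, sub_add_cancel]
  · rw [if_neg h]
    push_neg at h
    refine Prod.ext ?_ (Prod.ext ?_ ?_) <;>
      simp [max_eq_right h.le, smul_smul, ← Real.exp_add, add_mul, mul_assoc,
        sub_add_cancel, add_comm]
end

section
/- Let d be a positive natural number, n ≥ 1, and let s : {1,…,n} → ℝ be logits and v : {1,…,n} → ℝ^d be values. Define the online softmax recurrence by m_1 = s_1, S_1 = 1, W_1 = v_1, and for 2 ≤ j ≤ n: m_j = max(m_{j−1}, s_j), S_j = S_{j−1}·exp(m_{j−1} − m_j) + exp(s_j − m_j), W_j = W_{j−1}·exp(m_{j−1} − m_j) + exp(s_j − m_j)·v_j. Then for every 1 ≤ j ≤ n: m_j = max_{1 ≤ u ≤ j} s_u, S_j = Σ_{u=1}^{j} exp(s_u − m_j), and W_j = Σ_{u=1}^{j} exp(s_u − m_j)·v_u. -/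
/-- The online softmax recurrence computes, at every step `j`, the running
maximum, the rescaled normalizer, and the rescaled weighted value sum of the
prefix `1, …, j`. -/
theorem online_softmax_invariant (d : ℕ) (hd : 0 < d) (n : ℕ) (hn : 1 ≤ n)
    (s : ℕ → ℝ) (v : ℕ → EuclideanSpace ℝ (Fin d))
    (m S : ℕ → ℝ) (W : ℕ → EuclideanSpace ℝ (Fin d))
    (hm1 : m 1 = s 1) (hS1 : S 1 = 1) (hW1 : W 1 = v 1)
    (hm : ∀ j, 2 ≤ j → j ≤ n → m j = max (m (j - 1)) (s j))
    (hS : ∀ j, 2 ≤ j → j ≤ n →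
      S j = S (j - 1) * Real.exp (m (j - 1) - m j) + Real.exp (s j - m j))
    (hW : ∀ j, 2 ≤ j → j ≤ n →
      W j = Real.exp (m (j - 1) - m j) • W (j - 1)
              + Real.exp (s j - m j) • v j) :
    ∀ j, ∀ hj : 1 ≤ j, j ≤ n →
      m j = (Finset.Icc 1 j).sup' (Finset.nonempty_Icc.mpr hj) s ∧
      S j = ∑ u ∈ Finset.Icc 1 j, Real.exp (s u - m j) ∧
      W j = ∑ u ∈ Finset.Icc 1 j, Real.exp (s u - m j) • v u := by
  intro j
  induction j with
  | zero => intro hj; omega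
  | succ k ih =>
    intro hj hjn
    rcases Nat.lt_or_ge k 1 with hk0 | hk1
    · have hk : k = 0 := by omega
      subst hk
      refine ⟨?_, ?_, ?_⟩ <;> simp [hm1, hS1, hW1]
    · have hkn : k ≤ n := by omega
      have h2 : 2 ≤ k + 1 := by omega
      obtain ⟨ihm, ihS, ihW⟩ := ih hk1 hkn
      have hsub : (k+1) - 1 = k := rfl
      have hmj := hm (k+1) h2 hjn; rw [hsub] at hmj
      have hSj := hS (k+1) h2 hjn; rw [hsub] at hSj
      have hWj := hW (k+1) h2 hjn; rw [hsub] at hWj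
      have hins : Finset.Icc 1 (k+1) = insert (k+1) (Finset.Icc 1 k) := by
        ext x; simp; omega
      refine ⟨?_, ?_, ?_⟩
      · rw [hmj, ihm, Finset.sup'_congr _ hins (fun x _ => rfl),
          Finset.sup'_insert]
        exact max_comm _ _
      · rw [hSj, ihS, Finset.sum_mul, hins,
          Finset.sum_insert (by simp)]
        rw [add_comm]
        congr 1
        apply Finset.sum_congr rfl
        intro u _
        rw [← Real.exp_add]; ring_nf
      · rw [hWj, ihW, Finset.smul_sum, hins,
          Finset.sum_insert (by simp)]
        rw [add_comm]
        congr 1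
        apply Finset.sum_congr rfl
        intro u _
        rw [smul_smul, ← Real.exp_add]; ring_nf
end

section
/- Let d be a positive natural number, n ≥ 1, s : {1,…,n} → ℝ and v : {1,…,n} → ℝ^d. Let (m_n, S_n, W_n) be the result of the online softmax recurrence (m_1 = s_1, S_1 = 1, W_1 = v_1; m_j = max(m_{j−1}, s_j), S_j = S_{j−1}·exp(m_{j−1} − m_j) + exp(s_j − m_j), W_j = W_{j−1}·exp(m_{j−1} − m_j) + exp(s_j − m_j)·v_j). Then S_n > 0 and the normalized output equals exact softmax attention: W_n / S_n = (Σ_{j=1}^{n} exp(s_j)·v_j) / (Σ_{j=1}^{n} exp(s_j)). -/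
/-- The normalized output of the online softmax recurrence equals exact
softmax attention: `S_n > 0` and `W_n / S_n = (Σ exp(s_j)·v_j) / (Σ exp(s_j))`. -/
theorem online_softmax_exact (d : ℕ) (hd : 0 < d) (n : ℕ) (hn : 1 ≤ n)
    (s : ℕ → ℝ) (v : ℕ → EuclideanSpace ℝ (Fin d))
    (m S : ℕ → ℝ) (W : ℕ → EuclideanSpace ℝ (Fin d))
    (hm1 : m 1 = s 1) (hS1 : S 1 = 1) (hW1 : W 1 = v 1)
    (hm : ∀ j, 2 ≤ j → j ≤ n → m j = max (m (j - 1)) (s j))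
    (hS : ∀ j, 2 ≤ j → j ≤ n →
      S j = S (j - 1) * Real.exp (m (j - 1) - m j) + Real.exp (s j - m j))
    (hW : ∀ j, 2 ≤ j → j ≤ n →
      W j = Real.exp (m (j - 1) - m j) • W (j - 1)
              + Real.exp (s j - m j) • v j) :
    0 < S n ∧
    (S n)⁻¹ • W n =
      (∑ j ∈ Finset.Icc 1 n, Real.exp (s j))⁻¹ •
        ∑ j ∈ Finset.Icc 1 n, Real.exp (s j) • v j := by
  have key : ∀ j, 1 ≤ j → j ≤ n →
      S j = Real.exp (-(m j)) * ∑ i ∈ Finset.Icc 1 j, Real.exp (s i) ∧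
      W j = Real.exp (-(m j)) • ∑ i ∈ Finset.Icc 1 j, Real.exp (s i) • v i := by
    intro j hj
    induction j, hj using Nat.le_induction with
    | base =>
      intro _
      simp [hS1, hW1, hm1, Real.exp_neg, ← Real.exp_add]
    | succ j hj ih =>
      intro hjn
      have hjn' : j ≤ n := le_trans (Nat.le_succ j) hjn
      obtain ⟨ihS, ihW⟩ := ih hjn'
      have h2 : 2 ≤ j + 1 := by omega
      have hsub : j + 1 - 1 = j := rfl
      have hsum : ∀ f : ℕ → ℝ, ∑ i ∈ Finset.Icc 1 (j+1), f i =
          (∑ i ∈ Finset.Icc 1 j, f i) + f (j+1) := fun f =>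
        Finset.sum_Icc_succ_top (by omega) f
      constructor
      · rw [hS (j+1) h2 hjn, hsub, ihS, hsum fun i => Real.exp (s i)]
        rw [Real.exp_sub, Real.exp_sub, Real.exp_neg]
        have := Real.exp_pos (m (j+1))
        field_simp
        rw [mul_comm (Real.exp (m (j+1)))]
        simp [mul_assoc, ← Real.exp_add]
      · rw [hW (j+1) h2 hjn, hsub, ihW]
        have hsumv : ∑ i ∈ Finset.Icc 1 (j+1), Real.exp (s i) • v i =
            (∑ i ∈ Finset.Icc 1 j, Real.exp (s i) • v i) + Real.exp (s (j+1)) • v (j+1) :=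
          Finset.sum_Icc_succ_top (by omega) _
        rw [hsumv, smul_add]
        simp only [smul_smul]
        congr 1
        · congr 1
          rw [← Real.exp_add]
          congr 1
          ring
        · congr 1
          rw [← Real.exp_add]
          congr 1
          ring
  obtain ⟨hSn, hWn⟩ := key n hn le_rfl
  have hTpos : 0 < ∑ i ∈ Finset.Icc 1 n, Real.exp (s i) := by
    apply Finset.sum_pos (fun i _ => Real.exp_pos _)
    exact ⟨1, Finset.mem_Icc.mpr ⟨le_rfl, hn⟩⟩
  constructor
  · rw [hSn]; positivity
  · rw [hSn, hWn, mul_inv, smul_smul]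
    congr 1
    rw [Real.exp_neg, inv_inv]
    field_simp
end

section
/- Let d be a positive natural number and let B_1, B_2 be disjoint nonempty finite index sets with logits s and values v defined on B_1 ∪ B_2. Then the block state of the union equals the merge of the block states: u(B_1 ∪ B_2) = u(B_1) ⊕ u(B_2). -/
/-- The block state `u(B) = (m_B, Σ_{j∈B} exp(s_j − m_B),
Σ_{j∈B} exp(s_j − m_B)·v_j)` with `m_B = max_{j∈B} s_j`, for a nonempty
finite index set `B` (junk value on the empty set). -/
noncomputable def blockState {d : ℕ} {ι : Type*}
    (s : ι → ℝ) (v : ι → EuclideanSpace ℝ (Fin d)) (B : Finset ι) :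
    AttnState d :=
  if hB : B.Nonempty then
    (B.sup' hB s,
      ∑ j ∈ B, Real.exp (s j - B.sup' hB s),
      ∑ j ∈ B, Real.exp (s j - B.sup' hB s) • v j)
  else (0, 0, 0)

/-- Block composition: the block state of a disjoint union of two nonempty
blocks equals the merge of the block states. -/
theorem blockState_union (d : ℕ) (hd : 0 < d) {ι : Type*} [DecidableEq ι]
    (B₁ B₂ : Finset ι) (hB₁ : B₁.Nonempty) (hB₂ : B₂.Nonempty)
    (hdisj : Disjoint B₁ B₂)
    (s : ι → ℝ) (v : ι → EuclideanSpace ℝ (Fin d)) :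
    blockState s v (B₁ ∪ B₂) = merge (blockState s v B₁) (blockState s v B₂) := by
  have hU : (B₁ ∪ B₂).Nonempty := hB₁.mono Finset.subset_union_left
  set m₁ := B₁.sup' hB₁ s with hm₁
  set m₂ := B₂.sup' hB₂ s with hm₂
  have hsup : (B₁ ∪ B₂).sup' hU s = m₁ ⊔ m₂ := Finset.sup'_union hB₁ hB₂ s
  simp only [blockState, merge, dif_pos hB₁, dif_pos hB₂, dif_pos hU, hsup]
  rw [Finset.sum_union hdisj, Finset.sum_union hdisj]
  rcases le_or_gt m₂ m₁ with h | h
  · rw [if_pos h]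
    have hmax : m₁ ⊔ m₂ = m₁ := sup_eq_left.mpr h
    refine Prod.ext hmax (Prod.ext ?_ ?_) <;> simp only [hmax]
    · rw [Finset.sum_mul]
      congr 1
      refine Finset.sum_congr rfl fun j _ => ?_
      rw [← Real.exp_add]; ring_nf; rfl
    · rw [Finset.smul_sum]
      congr 1
      refine Finset.sum_congr rfl fun j _ => ?_
      rw [smul_smul, ← Real.exp_add]; ring_nf; rfl
  · rw [if_neg (not_le.mpr h)]
    have hmax : m₁ ⊔ m₂ = m₂ := sup_eq_right.mpr h.le
    refine Prod.ext hmax (Prod.ext ?_ ?_) <;> simp only [hmax]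
    · rw [Finset.sum_mul, add_comm]
      congr 1
      refine Finset.sum_congr rfl fun j _ => ?_
      rw [← Real.exp_add]; ring_nf; rfl
    · rw [Finset.smul_sum, add_comm]
      congr 1
      refine Finset.sum_congr rfl fun j _ => ?_
      rw [smul_smul, ← Real.exp_add]; ring_nf; rfl
end

section
/- Let d be a positive natural number, K ≥ 1, and let B_1, …, B_K be pairwise disjoint nonempty finite index sets with logits s and values v defined on their union. Then the block state of the union equals the left-fold of the merge over the individual block states: u(B_1 ∪ ⋯ ∪ B_K) = u(B_1) ⊕ u(B_2) ⊕ ⋯ ⊕ u(B_K). -/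
lemma blockState_union_s11 {d : ℕ} {ι : Type*} [DecidableEq ι]
    (s : ι → ℝ) (v : ι → EuclideanSpace ℝ (Fin d))
    {A C : Finset ι} (hA : A.Nonempty) (hC : C.Nonempty) (h : Disjoint A C) :
    blockState s v (A ∪ C) = merge (blockState s v A) (blockState s v C) := by
  have hAC : (A ∪ C).Nonempty := hA.mono Finset.subset_union_left
  simp only [blockState, dif_pos hA, dif_pos hC, dif_pos hAC, merge]
  have hsup : (A ∪ C).sup' hAC s = A.sup' hA s ⊔ C.sup' hC s :=
    Finset.sup'_union hA hC s
  set mA := A.sup' hA s with hmA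
  set mC := C.sup' hC s with hmC
  by_cases hm : mA ≥ mC
  · rw [if_pos hm]
    have hs : (A ∪ C).sup' hAC s = mA := by rw [hsup, sup_eq_left.mpr hm]
    rw [hs, Finset.sum_union h, Finset.sum_union h]
    refine Prod.ext rfl (Prod.ext ?_ ?_)
    · simp only
      congr 1
      rw [Finset.sum_mul]
      refine Finset.sum_congr rfl fun j _ => ?_
      rw [← Real.exp_add]; ring_nf
    · simp only
      congr 1
      rw [Finset.smul_sum]
      refine Finset.sum_congr rfl fun j _ => ?_
      rw [smul_smul, ← Real.exp_add]; ring_nf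
  · rw [if_neg hm]
    push_neg at hm
    have hs : (A ∪ C).sup' hAC s = mC := by rw [hsup, sup_eq_right.mpr hm.le]
    rw [hs, Finset.sum_union h, Finset.sum_union h]
    refine Prod.ext rfl (Prod.ext ?_ ?_)
    · simp only
      rw [add_comm]
      congr 1
      rw [Finset.sum_mul]
      refine Finset.sum_congr rfl fun j _ => ?_
      rw [← Real.exp_add]; ring_nf
    · simp only
      rw [add_comm]
      congr 1
      rw [Finset.smul_sum]
      refine Finset.sum_congr rfl fun j _ => ?_
      rw [smul_smul, ← Real.exp_add]; ring_nf

/-- Block composition for `K ≥ 1` pairwise disjoint nonempty blocks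
`B_1, …, B_K`: the block state of the union equals the left-fold of the merge
over the individual block states,
`u(B_1 ∪ ⋯ ∪ B_K) = u(B_1) ⊕ u(B_2) ⊕ ⋯ ⊕ u(B_K)`. -/
theorem blockState_multi_union (d : ℕ) (hd : 0 < d) {ι : Type*} [DecidableEq ι]
    (K : ℕ) (hK : 1 ≤ K) (B : ℕ → Finset ι)
    (hne : ∀ k, 1 ≤ k → k ≤ K → (B k).Nonempty)
    (hdisj : ∀ i j, 1 ≤ i → i ≤ K → 1 ≤ j → j ≤ K → i ≠ j →
      Disjoint (B i) (B j))
    (s : ι → ℝ) (v : ι → EuclideanSpace ℝ (Fin d)) :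
    blockState s v ((Finset.Icc 1 K).biUnion B) =
      List.foldl merge (blockState s v (B 1))
        ((List.range' 2 (K - 1)).map fun k => blockState s v (B k)) := by
  induction K, hK using Nat.le_induction with
  | base => simp [List.range']
  | succ K hK1 ih =>
    have hIcc : Finset.Icc 1 (K + 1) = insert (K + 1) (Finset.Icc 1 K) := by
      ext x; simp [Finset.mem_Icc]; omega
    have hU : (Finset.Icc 1 (K + 1)).biUnion B =
        (Finset.Icc 1 K).biUnion B ∪ B (K + 1) := by
      rw [hIcc, Finset.biUnion_insert, Finset.union_comm]
    have hUne : ((Finset.Icc 1 K).biUnion B).Nonempty := by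
      obtain ⟨x, hx⟩ := hne 1 le_rfl (by omega)
      exact ⟨x, Finset.mem_biUnion.mpr ⟨1, by simp [hK1], hx⟩⟩
    have hdis : Disjoint ((Finset.Icc 1 K).biUnion B) (B (K + 1)) := by
      rw [Finset.disjoint_biUnion_left]
      intro i hi
      simp only [Finset.mem_Icc] at hi
      exact hdisj i (K + 1) hi.1 (by omega) (by omega) (by omega) (by omega)
    have hrange : List.range' 2 (K + 1 - 1) = List.range' 2 (K - 1) ++ [K + 1] := by
      have : K + 1 - 1 = (K - 1) + 1 := by omega
      rw [this, List.range'_concat]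
      congr 2
      omega
    rw [hU, blockState_union_s11 s v hUne (hne (K + 1) (by omega) le_rfl) hdis,
      hrange, List.map_append, List.foldl_append,
      ih (fun k h1 h2 => hne k h1 (by omega))
        (fun i j h1 h2 h3 h4 h5 => hdisj i j h1 (by omega) h3 (by omega) h5)]
    simp [merge]
end

section
/- Let M be a monoid and n a natural number, and let a : {0,…,n−1} → M. Define the Hillis–Steele iterates x^(0)_i = a_i and, for k ≥ 0, x^(k+1)_i = x^(k)_{i−2^k} · x^(k)_i if i ≥ 2^k, and x^(k+1)_i = x^(k)_i otherwise. Then for every k and every i < n, x^(k)_i equals the product a_{i−min(i, 2^k−1)} · a_{i−min(i, 2^k−1)+1} · ⋯ · a_i; in particular, whenever 2^k > i, x^(k)_i = a_0 · a_1 · ⋯ · a_i, so after ⌈log₂ n⌉ doubling steps every position holds its inclusive prefix product. -/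
/-- Correctness of the Hillis–Steele doubling scan over an arbitrary monoid:
after `k` steps, position `i` holds the ordered product of the window of the
last `min (i, 2^k − 1) + 1` entries ending at `i`; in particular, once
`2^k > i` (e.g. after `⌈log₂ n⌉` steps), position `i` holds the inclusive
prefix product `a_0 ⋯ a_i`. -/
theorem hillis_steele_scan (M : Type*) [Monoid M] (n : ℕ) (a : ℕ → M)
    (x : ℕ → ℕ → M)
    (hx0 : ∀ i, x 0 i = a i)
    (hxs : ∀ k i, x (k + 1) i =
      if 2 ^ k ≤ i then x k (i - 2 ^ k) * x k i else x k i) :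
    (∀ k i, i < n →
      x k i =
        ((List.range' (i - min i (2 ^ k - 1)) (min i (2 ^ k - 1) + 1)).map
          a).prod) ∧
    (∀ k i, i < n → i < 2 ^ k →
      x k i = ((List.range (i + 1)).map a).prod) ∧
    (∀ i, i < n →
      x (Nat.clog 2 n) i = ((List.range (i + 1)).map a).prod) := by
  have main : ∀ k i,
      x k i =
        ((List.range' (i - min i (2 ^ k - 1)) (min i (2 ^ k - 1) + 1)).map
          a).prod := by
    intro k
    induction k with
    | zero =>
      intro i
      simp [hx0]
    | succ k ih =>
      intro i
      rw [hxs]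
      by_cases h : 2 ^ k ≤ i
      · rw [if_pos h, ih, ih]
        have hp : 0 < 2 ^ k := Nat.pow_pos (by norm_num)
        have hpk1 : 2 ^ (k + 1) = 2 ^ k + 2 ^ k := by ring
        set m := min i (2 ^ (k + 1) - 1) with hm
        have hmin1 : min (i - 2 ^ k) (2 ^ k - 1) = m - 2 ^ k := by omega
        have hmin2 : min i (2 ^ k - 1) = 2 ^ k - 1 := by omega
        rw [hmin1, hmin2]
        have h1 : (i - 2 ^ k) - (m - 2 ^ k) = i - m := by omega
        have h2 : i - (2 ^ k - 1) = (i - m) + (m - 2 ^ k + 1) := by omega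
        have h3 : (m - 2 ^ k + 1) + (2 ^ k - 1 + 1) = m + 1 := by omega
        rw [h1, h2, ← List.prod_append, ← List.map_append, List.range'_append_1,
          h3]
      · rw [if_neg h]
        have : min i (2 ^ (k + 1) - 1) = min i (2 ^ k - 1) := by
          have hp : 0 < 2 ^ k := Nat.pow_pos (by norm_num)
          have hpk1 : 2 ^ (k + 1) = 2 ^ k + 2 ^ k := by ring
          omega
        rw [ih, this]
  have pref : ∀ k i, i < 2 ^ k → x k i = ((List.range (i + 1)).map a).prod := by
    intro k i hik
    have hp : 0 < 2 ^ k := Nat.pow_pos (by norm_num)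
    have : min i (2 ^ k - 1) = i := by omega
    rw [main k i, this, Nat.sub_self, List.range_eq_range']
  refine ⟨fun k i _ => main k i, fun k i _ h => pref k i h, fun i hin => ?_⟩
  exact pref _ i (lt_of_lt_of_le hin (Nat.le_pow_clog (by norm_num) n))
end
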